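/- If a monomial x⊗y⊗z ∈ A⊗A⊗A is a canonical R-matrix (i.e. it is invertible in A⊗A⊗A and satisfies the three centralizing conditions and the two hexagon identities), then x = y = z = 1. -/

import Mathlib

/-!
Write `R = x ⊗ y ⊗ z`. Multiplying two adjacent tensor factors collapses the hexagon
identities to `R = U₁ * R` and `R = U₂ * R` for `U₁ = x ⊗ 1 ⊗ zy` and `U₂ = 1 ⊗ yx ⊗ z`, so
`U₁ = U₂ = 1` because `R` is invertible. The centralizing conditions make conjugation by `R`
cycle the tensor factors, which turns `U₁ = 1` into `V = 1 ⊗ zy ⊗ x = 1`. Multiplying out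
`U₁ = 1` gives `xzy = 1`, and then `R = U₂ * V * U₁ = 1`.
-/

open TensorProduct Algebra.TensorProduct

section Contraction

variable (k A : Type*) [CommRing k] [Ring A] [Algebra k A]
variable (M : Type*) [AddCommGroup M] [Module k M]

noncomputable def mulLastTwo : (M ⊗[k] A) ⊗[k] A →ₗ[k] M ⊗[k] A :=
  (LinearMap.mul' k A).lTensor M ∘ₗ (TensorProduct.assoc k M A A).toLinearMap

variable {k A M}

@[simp]
theorem mulLastTwo_tmul (m : M) (a b : A) :
    mulLastTwo k A M (m ⊗ₜ a ⊗ₜ b) = m ⊗ₜ (a * b) := by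
  simp [mulLastTwo]

theorem mul_mul_eq_one_of_tmul_tmul_eq_one {a b c : A}
    (h : a ⊗ₜ[k] b ⊗ₜ[k] c = 1) : a * (b * c) = 1 := by
  simpa [one_def] using congrArg (LinearMap.mul' k A ∘ₗ mulLastTwo k A A) h

end Contraction

section RMatrix

variable {k A : Type*} [CommRing k] [Ring A] [Algebra k A]

theorem one_tmul_tmul_mul_eq_mul_tmul_one_tmul {R : A ⊗[k] A ⊗[k] A}
    (h₂ : ∀ a : A, ((1 : A) ⊗ₜ[k] a ⊗ₜ[k] (1 : A)) * R = R * ((1 : A) ⊗ₜ[k] (1 : A) ⊗ₜ[k] a))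
    (h₃ : ∀ a : A, ((1 : A) ⊗ₜ[k] (1 : A) ⊗ₜ[k] a) * R = R * (a ⊗ₜ[k] (1 : A) ⊗ₜ[k] (1 : A)))
    (b c : A) :
    ((1 : A) ⊗ₜ[k] b ⊗ₜ[k] c) * R = R * (c ⊗ₜ[k] (1 : A) ⊗ₜ[k] b) :=
  calc ((1 : A) ⊗ₜ[k] b ⊗ₜ[k] c) * R
      = ((1 : A) ⊗ₜ[k] b ⊗ₜ[k] (1 : A)) * (((1 : A) ⊗ₜ[k] (1 : A) ⊗ₜ[k] c) * R) := by
        rw [← mul_assoc, tmul_mul_tmul, tmul_mul_tmul]; simp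
    _ = (((1 : A) ⊗ₜ[k] b ⊗ₜ[k] (1 : A)) * R) * (c ⊗ₜ[k] (1 : A) ⊗ₜ[k] (1 : A)) := by
        rw [h₃, mul_assoc]
    _ = R * (c ⊗ₜ[k] (1 : A) ⊗ₜ[k] b) := by
        rw [h₂, mul_assoc, tmul_mul_tmul, tmul_mul_tmul]; simp

variable {x y z : A}

theorem tmul_one_tmul_mul_eq_one_of_hexagon (hunit : IsUnit (x ⊗ₜ[k] y ⊗ₜ[k] z))
    (hhex : x ⊗ₜ[k] y ⊗ₜ[k] (1 : A) ⊗ₜ[k] z = (x * x) ⊗ₜ[k] y ⊗ₜ[k] (z * y) ⊗ₜ[k] z) :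
    x ⊗ₜ[k] (1 : A) ⊗ₜ[k] (z * y) = 1 := by
  refine hunit.mul_eq_right.mp ?_
  simpa [mul_assoc, eq_comm] using congrArg (mulLastTwo k A (A ⊗[k] A)) hhex

theorem one_tmul_mul_tmul_eq_one_of_hexagon (hunit : IsUnit (x ⊗ₜ[k] y ⊗ₜ[k] z))
    (hhex : x ⊗ₜ[k] (1 : A) ⊗ₜ[k] y ⊗ₜ[k] z = x ⊗ₜ[k] (y * x) ⊗ₜ[k] y ⊗ₜ[k] (z * z)) :
    (1 : A) ⊗ₜ[k] (y * x) ⊗ₜ[k] z = 1 := by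
  refine hunit.mul_eq_right.mp ?_
  simpa [mul_assoc, eq_comm] using congrArg ((mulLastTwo k A A).rTensor A) hhex

end RMatrix

theorem monomial_canonical_R_matrix_is_trivial
    (k A : Type*) [CommRing k] [Ring A] [Algebra k A]
    (x y z : A)
    (hunit : IsUnit (x ⊗ₜ[k] y ⊗ₜ[k] z))
    (hcen3 : ∀ a : A, x ⊗ₜ[k] y ⊗ₜ[k] (a * z) = (x * a) ⊗ₜ[k] y ⊗ₜ[k] z)
    (hcen2 : ∀ a : A, x ⊗ₜ[k] (a * y) ⊗ₜ[k] z = x ⊗ₜ[k] y ⊗ₜ[k] (z * a))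
    (hhex1 : x ⊗ₜ[k] y ⊗ₜ[k] (1 : A) ⊗ₜ[k] z
      = (x * x) ⊗ₜ[k] y ⊗ₜ[k] (z * y) ⊗ₜ[k] z)
    (hhex2 : x ⊗ₜ[k] (1 : A) ⊗ₜ[k] y ⊗ₜ[k] z
      = x ⊗ₜ[k] (y * x) ⊗ₜ[k] y ⊗ₜ[k] (z * z)) :
    x ⊗ₜ[k] y ⊗ₜ[k] z = (1 : A) ⊗ₜ[k] (1 : A) ⊗ₜ[k] (1 : A) := by
  have hU₁ := tmul_one_tmul_mul_eq_one_of_hexagon hunit hhex1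
  have hU₂ := one_tmul_mul_tmul_eq_one_of_hexagon hunit hhex2
  have hV : (1 : A) ⊗ₜ[k] (z * y) ⊗ₜ[k] x = 1 := by
    refine hunit.mul_eq_right.mp ?_
    rw [one_tmul_tmul_mul_eq_mul_tmul_one_tmul (by simpa using hcen2) (by simpa using hcen3),
      hU₁, mul_one]
  have hxzy : x * (z * y) = 1 := by simpa using mul_mul_eq_one_of_tmul_tmul_eq_one hU₁
  calc x ⊗ₜ[k] y ⊗ₜ[k] z
      = ((1 : A) ⊗ₜ[k] (y * x) ⊗ₜ[k] z) * ((1 : A) ⊗ₜ[k] (z * y) ⊗ₜ[k] x) *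
          (x ⊗ₜ[k] (1 : A) ⊗ₜ[k] (z * y)) := by simp [mul_assoc, hxzy]
    _ = (1 : A) ⊗ₜ[k] (1 : A) ⊗ₜ[k] (1 : A) := by
        rw [hU₂, hV, hU₁, mul_one, mul_one, one_def, one_def]
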